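/- arXiv:math/0010308 — 2 statements merged into one kernel-verified Lean document; each statement's English description precedes it below -/
import Mathlib

section
/- If T is self-adjoint with −1 ≤ T ≤ 1 and satisfies the braid relation T₁T₂T₁ = T₂T₁T₂, then R₃ = 1 + T₁ + T₁T₂ satisfies R₃* (1 + T₂) R₃ ≥ 0, i.e., P₃ is positive semidefinite, where P₃ = (1 + T₂) R₃. -/
/-- `ampl1 d T` is the amplification `T ⊗ 1` of an operator `T` on
`ℂ^d ⊗ ℂ^d` (modelled as `EuclideanSpace ℂ (Fin d × Fin d)`) to the triple
tensor power, acting on the first two tensor factors. -/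
noncomputable def ampl1 (d : ℕ)
    (T : EuclideanSpace ℂ (Fin d × Fin d) →L[ℂ] EuclideanSpace ℂ (Fin d × Fin d)) :
    EuclideanSpace ℂ (Fin d × Fin d × Fin d) →L[ℂ] EuclideanSpace ℂ (Fin d × Fin d × Fin d) :=
  LinearMap.toContinuousLinearMap
    { toFun := fun x => WithLp.toLp 2 (fun p =>
        T (WithLp.toLp 2 (fun r => x (r.1, r.2, p.2.2) : Fin d × Fin d → ℂ)) (p.1, p.2.1)
        : Fin d × Fin d × Fin d → ℂ)
      map_add' := by
        intro x y; apply WithLp.ofLp_injective; funext p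
        have : (WithLp.toLp 2 (fun r => (x + y) (r.1, r.2, p.2.2) : Fin d × Fin d → ℂ) :
            EuclideanSpace ℂ (Fin d × Fin d)) =
            (WithLp.toLp 2 (fun r => x (r.1, r.2, p.2.2) : Fin d × Fin d → ℂ) :
            EuclideanSpace ℂ (Fin d × Fin d)) +
            WithLp.toLp 2 (fun r => y (r.1, r.2, p.2.2) : Fin d × Fin d → ℂ) := rfl
        show T _ _ = _
        rw [this, map_add]; rfl
      map_smul' := by
        intro c x; apply WithLp.ofLp_injective; funext p
        have : (WithLp.toLp 2 (fun r => (c • x) (r.1, r.2, p.2.2) : Fin d × Fin d → ℂ) :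
            EuclideanSpace ℂ (Fin d × Fin d)) =
            c • (WithLp.toLp 2 (fun r => x (r.1, r.2, p.2.2) : Fin d × Fin d → ℂ) :
            EuclideanSpace ℂ (Fin d × Fin d)) := rfl
        show T _ _ = _
        rw [this, map_smul]; rfl }

/-- `ampl2 d T` is the amplification `1 ⊗ T`, acting on the last two tensor
factors of the triple tensor power. -/
noncomputable def ampl2 (d : ℕ)
    (T : EuclideanSpace ℂ (Fin d × Fin d) →L[ℂ] EuclideanSpace ℂ (Fin d × Fin d)) :
    EuclideanSpace ℂ (Fin d × Fin d × Fin d) →L[ℂ] EuclideanSpace ℂ (Fin d × Fin d × Fin d) :=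
  LinearMap.toContinuousLinearMap
    { toFun := fun x => WithLp.toLp 2 (fun p =>
        T (WithLp.toLp 2 (fun r => x (p.1, r.1, r.2) : Fin d × Fin d → ℂ)) (p.2.1, p.2.2)
        : Fin d × Fin d × Fin d → ℂ)
      map_add' := by
        intro x y; apply WithLp.ofLp_injective; funext p
        have : (WithLp.toLp 2 (fun r => (x + y) (p.1, r.1, r.2) : Fin d × Fin d → ℂ) :
            EuclideanSpace ℂ (Fin d × Fin d)) =
            (WithLp.toLp 2 (fun r => x (p.1, r.1, r.2) : Fin d × Fin d → ℂ) :
            EuclideanSpace ℂ (Fin d × Fin d)) +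
            WithLp.toLp 2 (fun r => y (p.1, r.1, r.2) : Fin d × Fin d → ℂ) := rfl
        show T _ _ = _
        rw [this, map_add]; rfl
      map_smul' := by
        intro c x; apply WithLp.ofLp_injective; funext p
        have : (WithLp.toLp 2 (fun r => (c • x) (p.1, r.1, r.2) : Fin d × Fin d → ℂ) :
            EuclideanSpace ℂ (Fin d × Fin d)) =
            c • (WithLp.toLp 2 (fun r => x (p.1, r.1, r.2) : Fin d × Fin d → ℂ) :
            EuclideanSpace ℂ (Fin d × Fin d)) := rfl
        show T _ _ = _
        rw [this, map_smul]; rfl }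

/-!
Write `a = T₁`, `b = T₂`: self-adjoint contractions with `a b a = b a b`, and both properties
survive scaling `a, b` by `s ∈ [0, 1]`. So `F s = (1 + s b)(1 + s a + s² a b)` is a continuous path
of self-adjoint operators from `1` to `P₃`. The braid relation gives the second factorisation
`F s = (1 + s a)(1 + s b + s² b a)`, and for `s < 1` the factors `1 + s a`, `1 + s b` are injective;
a vector `x` killed by `F s` is therefore killed by both cofactors, which forces `x = s³ b a b x`,
so `x = 0`. Thus the least eigenvalue of `F s` cannot reach `0` before `s = 1`, and `F 1 = P₃ ≥ 0`.
-/

open scoped InnerProductSpace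
open Metric

namespace ContinuousLinearMap

section Normed

variable {𝕜 E : Type*} [NontriviallyNormedField 𝕜] [NormedAddCommGroup E] [NormedSpace 𝕜 E]

theorem eq_zero_of_apply_eq_self {c : E →L[𝕜] E} (hc : ‖c‖ < 1) {x : E} (hx : c x = x) :
    x = 0 := by
  by_contra hx₀
  have := calc ‖x‖ = ‖c x‖ := by rw [hx]
    _ ≤ ‖c‖ * ‖x‖ := c.le_opNorm x
    _ < ‖x‖ := mul_lt_of_lt_one_left (norm_pos_iff.mpr hx₀) hc
  exact this.false

theorem injective_one_add {c : E →L[𝕜] E} (hc : ‖c‖ < 1) : Function.Injective ⇑(1 + c) :=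
  (injective_iff_map_eq_zero _).mpr fun x hx =>
    eq_zero_of_apply_eq_self (c := -c) (by rwa [norm_neg]) <| by
      simpa [add_eq_zero_iff_neg_eq'] using hx

def symmetrizer (a b : E →L[𝕜] E) : E →L[𝕜] E := (1 + b) * (1 + a + a * b)

theorem symmetrizer_comm {a b : E →L[𝕜] E} (hab : a * b * a = b * a * b) :
    symmetrizer a b = symmetrizer b a := by
  simp only [symmetrizer, add_mul, mul_add, one_mul, mul_one, ← mul_assoc, hab]
  abel

theorem injective_symmetrizer {a b : E →L[𝕜] E} (ha : ‖a‖ < 1) (hb : ‖b‖ < 1)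
    (hab : a * b * a = b * a * b) : Function.Injective (symmetrizer a b) := by
  refine (injective_iff_map_eq_zero _).mpr fun x hx => ?_
  have h₁ : (1 + a + a * b) x = 0 :=
    injective_one_add hb (hx.trans (map_zero _).symm)
  have h₂ : (1 + b + b * a) x = 0 :=
    injective_one_add ha (((symmetrizer_comm hab) ▸ hx).trans (map_zero _).symm)
  have hbab : ‖b * a * b‖ < 1 := calc
    ‖b * a * b‖ ≤ ‖b‖ * ‖a‖ * ‖b‖ := norm_mul₃_le
    _ < 1 := mul_lt_one_of_nonneg_of_lt_one_left (by positivity)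
      (mul_lt_one_of_nonneg_of_lt_one_left (norm_nonneg b) hb ha.le) hb.le
  refine eq_zero_of_apply_eq_self hbab ?_
  -- `b (1 + a + a b) - (1 + b + b a) = b a b - 1`
  have hb₁ := congrArg b h₁
  simp only [_root_.add_apply, one_apply_eq_self, mul_apply_eq_comp, map_add, map_zero]
    at hb₁ h₂ ⊢
  linear_combination (norm := module) hb₁ - h₂

end Normed

section InnerProduct

variable {𝕜 E : Type*} [RCLike 𝕜] [NormedAddCommGroup E] [InnerProductSpace 𝕜 E]

theorem sInf_reApplyInnerSelf_sphere_nonneg_iff [ProperSpace E] [Nontrivial E]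
    (T : E →L[𝕜] E) :
    0 ≤ sInf (T.reApplyInnerSelf '' sphere 0 1) ↔ ∀ x, 0 ≤ T.reApplyInnerSelf x := by
  have hne : (sphere (0 : E) 1).Nonempty :=
    Set.nonempty_coe_sort.mp (NormedSpace.sphere_nonempty_rclike 𝕜 zero_le_one)
  constructor
  · intro h x
    rcases eq_or_ne x 0 with rfl | hx
    · simp [reApplyInnerSelf_apply]
    have hu : (‖x‖⁻¹ : 𝕜) • x ∈ sphere (0 : E) 1 := by simp [norm_smul, hx]
    have hbdd := ((isCompact_sphere (0 : E) 1).image T.reApplyInnerSelf_continuous).bddBelow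
    have hle := h.trans (csInf_le hbdd (Set.mem_image_of_mem _ hu))
    rw [reApplyInnerSelf_smul] at hle
    exact nonneg_of_mul_nonneg_right hle (by simp [hx])
  · intro h
    exact le_csInf (hne.image _) (Set.forall_mem_image.mpr fun x _ => h x)

theorem _root_.IsSelfAdjoint.apply_eq_zero_of_isMinOn_sphere [CompleteSpace E] {T : E →L[𝕜] E}
    (hT : IsSelfAdjoint T) {x₀ : E} (hx₀ : ‖x₀‖ = 1)
    (hmin : IsMinOn T.reApplyInnerSelf (sphere 0 1) x₀) (hzero : T.reApplyInnerSelf x₀ = 0) :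
    T x₀ = 0 := by
  have hx₀' : x₀ ≠ 0 := by rintro rfl; simp at hx₀
  set μ := ⨅ x : { x : E // x ≠ 0 }, T.rayleighQuotient x
  have hμ : T x₀ = (μ : 𝕜) • x₀ :=
    (hT.hasEigenvector_of_isMinOn hx₀' (by rwa [hx₀])).apply_eq_smul
  have : μ = 0 := by
    simpa [reApplyInnerSelf_apply, hμ, inner_smul_left, inner_self_eq_norm_sq_to_K, hx₀]
      using hzero
  simp [hμ, this]

theorem isPositive_of_continuous_of_injective [ProperSpace E] {F : ℝ → E →L[𝕜] E}
    (hF : Continuous F) (hsa : ∀ s ∈ Set.Icc (0 : ℝ) 1, IsSelfAdjoint (F s))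
    (h₀ : (F 0).IsPositive) (hinj : ∀ s ∈ Set.Ico (0 : ℝ) 1, Function.Injective (F s)) :
    (F 1).IsPositive := by
  refine ⟨(hsa 1 (by simp)).isSymmetric, ?_⟩
  rcases subsingleton_or_nontrivial E with hE | hE
  · exact fun x => by simp [Subsingleton.elim x 0, reApplyInnerSelf_apply]
  have hne : (sphere (0 : E) 1).Nonempty :=
    Set.nonempty_coe_sort.mp (NormedSpace.sphere_nonempty_rclike 𝕜 zero_le_one)
  -- `m s` is the least eigenvalue of `F s`
  set m : ℝ → ℝ := fun s => sInf ((F s).reApplyInnerSelf '' sphere 0 1)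
  have hm : Continuous m :=
    (isCompact_sphere (0 : E) 1).continuous_sInf (f := fun s x => (F s).reApplyInnerSelf x)
      (by simp only [reApplyInnerSelf_apply]; fun_prop)
  rw [← sInf_reApplyInnerSelf_sphere_nonneg_iff]
  by_contra! hm₁ : m 1 < 0
  have hm₀ : 0 ≤ m 0 := (sInf_reApplyInnerSelf_sphere_nonneg_iff (F 0)).mpr h₀.2
  obtain ⟨s₀, hs₀, hms₀⟩ := intermediate_value_Icc' zero_le_one hm.continuousOn ⟨hm₁.le, hm₀⟩
  have hs₀₁ : s₀ < 1 := hs₀.2.lt_of_ne (by rintro rfl; exact hm₁.ne hms₀)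
  obtain ⟨x₀, hx₀, hx₀_eq⟩ := (isCompact_sphere (0 : E) 1).exists_sInf_image_eq hne
    (F s₀).reApplyInnerSelf_continuous.continuousOn
  have hbdd := ((isCompact_sphere (0 : E) 1).image (F s₀).reApplyInnerSelf_continuous).bddBelow
  have hmin : IsMinOn (F s₀).reApplyInnerSelf (sphere 0 1) x₀ := fun x hx =>
    hx₀_eq ▸ csInf_le hbdd (Set.mem_image_of_mem _ hx)
  have hker := (hsa s₀ hs₀).apply_eq_zero_of_isMinOn_sphere (mem_sphere_zero_iff_norm.mp hx₀)
    hmin (hx₀_eq ▸ hms₀)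
  have : x₀ = 0 := hinj s₀ ⟨hs₀.1, hs₀₁⟩ (hker.trans (map_zero _).symm)
  simp [this] at hx₀

theorem isSelfAdjoint_and_norm_le_one_of_isPositive [CompleteSpace E] {a : E →L[𝕜] E}
    (h₁ : (1 + a).IsPositive) (h₂ : (1 - a).IsPositive) : IsSelfAdjoint a ∧ ‖a‖ ≤ 1 := by
  have hsymm : (a : E →ₗ[𝕜] E).IsSymmetric := fun x y => by
    simpa [inner_add_left, inner_add_right] using h₁.isSymmetric x y
  refine ⟨hsymm.isSelfAdjoint, ?_⟩
  rw [a.norm_eq_iSup_rayleighQuotient hsymm]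
  refine ciSup_le fun x => abs_le.mpr ?_
  have hq (c : E →L[𝕜] E) (hc : c.IsPositive) : 0 ≤ c.rayleighQuotient x :=
    div_nonneg (hc.2 x) (sq_nonneg _)
  have h₁' := hq _ h₁
  have h₂' := hq _ h₂
  have hone : (1 : E →L[𝕜] E).rayleighQuotient x ≤ 1 := by
    simpa [rayleighQuotient, reApplyInnerSelf_apply, inner_self_eq_norm_sq] using
      div_self_le_one (‖x‖ ^ 2)
  rw [rayleighQuotient_add] at h₁'
  rw [sub_eq_add_neg, rayleighQuotient_add, rayleighQuotient_neg_apply] at h₂'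
  constructor <;> linarith


theorem isSelfAdjoint_symmetrizer [CompleteSpace E] {a b : E →L[𝕜] E} (ha : IsSelfAdjoint a)
    (hb : IsSelfAdjoint b) : IsSelfAdjoint (symmetrizer a b) := by
  simp only [IsSelfAdjoint, symmetrizer, star_mul, star_add, star_one, ha.star_eq, hb.star_eq]
  noncomm_ring

theorem isPositive_symmetrizer [ProperSpace E] {a b : E →L[𝕜] E} (ha : IsSelfAdjoint a)
    (hb : IsSelfAdjoint b) (ha₁ : ‖a‖ ≤ 1) (hb₁ : ‖b‖ ≤ 1) (hab : a * b * a = b * a * b) :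
    (symmetrizer a b).IsPositive := by
  have hF : Continuous fun s : ℝ => symmetrizer ((s : 𝕜) • a) ((s : 𝕜) • b) := by
    unfold symmetrizer; fun_prop
  have hsa (s : ℝ) {c : E →L[𝕜] E} (hc : IsSelfAdjoint c) : IsSelfAdjoint ((s : 𝕜) • c) :=
    IsSelfAdjoint.smul (RCLike.conj_ofReal s) hc
  have hnorm {s : ℝ} (hs : s ∈ Set.Ico (0 : ℝ) 1) {c : E →L[𝕜] E} (hc : ‖c‖ ≤ 1) :
      ‖(s : 𝕜) • c‖ < 1 := by
    rw [norm_smul, RCLike.norm_ofReal, abs_of_nonneg hs.1]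
    exact mul_lt_one_of_nonneg_of_lt_one_left hs.1 hs.2 hc
  have hbraid (s : ℝ) : (s : 𝕜) • a * ((s : 𝕜) • b) * ((s : 𝕜) • a) =
      (s : 𝕜) • b * ((s : 𝕜) • a) * ((s : 𝕜) • b) := by
    simp only [smul_mul_assoc, mul_smul_comm, smul_smul, hab]
  simpa using isPositive_of_continuous_of_injective hF
    (fun s _ => isSelfAdjoint_symmetrizer (hsa s ha) (hsa s hb))
    (by simp [symmetrizer])
    (fun s hs => injective_symmetrizer (hnorm hs ha₁) (hnorm hs hb₁) (hbraid s))

end InnerProduct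

end ContinuousLinearMap

namespace EuclideanSpace

variable {𝕜 ι κ μ : Type*} [RCLike 𝕜] [Fintype ι] [Fintype κ] [Fintype μ]

def slice (e : ι ≃ κ × μ) (x : EuclideanSpace 𝕜 ι) (k : μ) : EuclideanSpace 𝕜 κ :=
  WithLp.toLp 2 fun r => x (e.symm (r, k))

theorem inner_eq_sum_inner_slice (e : ι ≃ κ × μ) (x y : EuclideanSpace 𝕜 ι) :
    ⟪x, y⟫_𝕜 = ∑ k, ⟪slice e x k, slice e y k⟫_𝕜 := by
  simp only [PiLp.inner_apply, slice]
  rw [← e.symm.sum_comp, Fintype.sum_prod_type, Finset.sum_comm]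

theorem isPositive_of_slice {A : EuclideanSpace 𝕜 ι →L[𝕜] EuclideanSpace 𝕜 ι}
    {S : EuclideanSpace 𝕜 κ →L[𝕜] EuclideanSpace 𝕜 κ} (e : ι ≃ κ × μ)
    (hA : ∀ x k, slice e (A x) k = S (slice e x k)) (hS : S.IsPositive) : A.IsPositive := by
  refine ⟨fun x y => ?_, fun x => ?_⟩
  · simp only [ContinuousLinearMap.coe_coe, inner_eq_sum_inner_slice e, hA,
      hS.inner_left_eq_inner_right]
  · rw [ContinuousLinearMap.reApplyInnerSelf_apply, inner_eq_sum_inner_slice e, map_sum]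
    exact Finset.sum_nonneg fun k _ => hA x k ▸ hS.2 _

end EuclideanSpace

open ContinuousLinearMap EuclideanSpace in
theorem P3_positive_of_braided_general (d : ℕ)
    (T : EuclideanSpace ℂ (Fin d × Fin d) →L[ℂ] EuclideanSpace ℂ (Fin d × Fin d))
    (hpos1 : (1 + T).IsPositive) (hpos2 : (1 - T).IsPositive)
    (hbraid : ampl1 d T ∘L ampl2 d T ∘L ampl1 d T = ampl2 d T ∘L ampl1 d T ∘L ampl2 d T) :
    ((1 + ampl2 d T) ∘L (1 + ampl1 d T + ampl1 d T ∘L ampl2 d T)).IsPositive := by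
  -- `T₁` acts on the slices over the third tensor factor, `T₂` on those over the first
  let e₁ := (Equiv.prodAssoc (Fin d) (Fin d) (Fin d)).symm
  let e₂ := Equiv.prodComm (Fin d) (Fin d × Fin d)
  obtain ⟨ha, ha₁⟩ := isSelfAdjoint_and_norm_le_one_of_isPositive (a := ampl1 d T)
    (isPositive_of_slice e₁ (fun _ _ => rfl) hpos1) (isPositive_of_slice e₁ (fun _ _ => rfl) hpos2)
  obtain ⟨hb, hb₁⟩ := isSelfAdjoint_and_norm_le_one_of_isPositive (a := ampl2 d T)
    (isPositive_of_slice e₂ (fun _ _ => rfl) hpos1) (isPositive_of_slice e₂ (fun _ _ => rfl) hpos2)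
  exact isPositive_symmetrizer ha hb ha₁ hb₁ (by rw [mul_assoc, mul_assoc]; exact hbraid)

/-- If `T` is self-adjoint with `-1 ≤ T ≤ 1` (i.e. `1 ± T ≥ 0`)
and the braid relation `T₁T₂T₁ = T₂T₁T₂` holds, then
`P₃ = (1 + T₂)(1 + T₁ + T₁T₂)` is positive semidefinite. -/
theorem P3_positive_of_braided (d : ℕ) (hd : 1 ≤ d)
    (T : EuclideanSpace ℂ (Fin d × Fin d) →L[ℂ] EuclideanSpace ℂ (Fin d × Fin d))
    (hsa : IsSelfAdjoint T)
    (hpos1 : (1 + T).IsPositive) (hpos2 : (1 - T).IsPositive)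
    (hbraid : ampl1 d T ∘L ampl2 d T ∘L ampl1 d T = ampl2 d T ∘L ampl1 d T ∘L ampl2 d T) :
    ((1 + ampl2 d T) ∘L (1 + ampl1 d T + ampl1 d T ∘L ampl2 d T)).IsPositive :=
  P3_positive_of_braided_general d T hpos1 hpos2 hbraid
end

section
/- Let T be self-adjoint on H ⊗ H with −1 ≤ T ≤ 1 satisfying the braid relation, and R₃ = 1 + T₁ + T₁T₂ on H^{⊗3}. Then ker(1 + T₁) ⊆ ker P₃ and ker(1 + T₂) ⊆ ker P₃, where P₃ = (1 + T₂) R₃. -/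
/-! If `T₁ x = -x` then `R₃ x = T₁ T₂ x`, and the braid relation gives
`T₂ T₁ T₂ x = T₁ T₂ T₁ x = -T₁ T₂ x`, so `1 + T₂` kills it.
If `T₂ x = -x` then `R₃ x = x`, which `1 + T₂` kills. -/

section Braided

variable {R M : Type*} [Semiring R] [AddCommGroup M] [Module R M]

theorem Module.End.apply_eq_neg_of_mem_ker_one_add {a : Module.End R M} {x : M}
    (hx : x ∈ LinearMap.ker (1 + a)) : a x = -x :=
  eq_neg_of_add_eq_zero_right hx

theorem Module.End.ker_one_add_right_le_ker_mul (a b : Module.End R M) :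
    LinearMap.ker (1 + b) ≤ LinearMap.ker ((1 + b) * (1 + a + a * b)) := by
  intro x hx
  have hb := apply_eq_neg_of_mem_ker_one_add hx
  have hR : (1 + a + a * b) x = x := by
    simp only [LinearMap.add_apply, Module.End.mul_apply, Module.End.one_apply, hb, map_neg]
    abel
  rw [LinearMap.mem_ker, Module.End.mul_apply, hR]
  exact hx

theorem Module.End.ker_one_add_left_le_ker_mul_of_braid {a b : Module.End R M}
    (hbraid : a * b * a = b * a * b) :
    LinearMap.ker (1 + a) ≤ LinearMap.ker ((1 + b) * (1 + a + a * b)) := by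
  intro x hx
  have ha := apply_eq_neg_of_mem_ker_one_add hx
  have hbab : b (a (b x)) = -a (b x) := by
    calc b (a (b x)) = (b * a * b) x := rfl
      _ = (a * b * a) x := by rw [hbraid]
      _ = -a (b x) := by simp only [Module.End.mul_apply, ha, map_neg]
  rw [LinearMap.mem_ker]
  simp only [Module.End.mul_apply, LinearMap.add_apply, Module.End.one_apply, ha,
    add_neg_cancel, zero_add, hbab]

end Braided

theorem ker_le_ker_P3_of_braided_general (d : ℕ)
    (T : EuclideanSpace ℂ (Fin d × Fin d) →L[ℂ] EuclideanSpace ℂ (Fin d × Fin d))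
    (hbraid : ampl1 d T ∘L ampl2 d T ∘L ampl1 d T = ampl2 d T ∘L ampl1 d T ∘L ampl2 d T) :
    LinearMap.ker (1 + ampl1 d T).toLinearMap ≤
        LinearMap.ker ((1 + ampl2 d T) ∘L (1 + ampl1 d T + ampl1 d T ∘L ampl2 d T)).toLinearMap ∧
      LinearMap.ker (1 + ampl2 d T).toLinearMap ≤
        LinearMap.ker ((1 + ampl2 d T) ∘L (1 + ampl1 d T + ampl1 d T ∘L ampl2 d T)).toLinearMap :=
  -- `toLinearMap` turns `∘L` into the product of `Module.End` definitionally.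
  ⟨Module.End.ker_one_add_left_le_ker_mul_of_braid (congrArg ContinuousLinearMap.toLinearMap hbraid),
    Module.End.ker_one_add_right_le_ker_mul _ _⟩

/-- Let `T` be self-adjoint on `H ⊗ H` (here `H = ℂ^d`) with
`-1 ≤ T ≤ 1` and braided. Then `ker (1 + T₁) ⊆ ker P₃` and
`ker (1 + T₂) ⊆ ker P₃`, where `P₃ = (1 + T₂)(1 + T₁ + T₁T₂)`. -/
theorem ker_le_ker_P3_of_braided (d : ℕ) (hd : 1 ≤ d)
    (T : EuclideanSpace ℂ (Fin d × Fin d) →L[ℂ] EuclideanSpace ℂ (Fin d × Fin d))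
    (hsa : IsSelfAdjoint T)
    (hpos1 : (1 + T).IsPositive) (hpos2 : (1 - T).IsPositive)
    (hbraid : ampl1 d T ∘L ampl2 d T ∘L ampl1 d T = ampl2 d T ∘L ampl1 d T ∘L ampl2 d T) :
    LinearMap.ker (1 + ampl1 d T).toLinearMap ≤
        LinearMap.ker ((1 + ampl2 d T) ∘L (1 + ampl1 d T + ampl1 d T ∘L ampl2 d T)).toLinearMap ∧
      LinearMap.ker (1 + ampl2 d T).toLinearMap ≤
        LinearMap.ker ((1 + ampl2 d T) ∘L (1 + ampl1 d T + ampl1 d T ∘L ampl2 d T)).toLinearMap :=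
  ker_le_ker_P3_of_braided_general d T hbraid
end
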